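/- With b_n and B_n as above, for every n ≥ 0 the identity B_{n+1}(x) + b_{n+1}/(6x+1) = −(3(6x+5)(6x+7)/x)·(B_n(x+1) + b_n/(6x+7)) + 216(x+n+1)·(B_n(x) + b_n/(6x+1)) + (2^{n+1}·(6n+5)!!/(2n+2)!)·(x+n+1)/(x(6x+1)) holds in ℚ(x). -/

import Mathlib

/-!
Peeling off the `j = 1` term of `B_{n+1}` and using `(x+n+1)_{[j]} = (x+n+1)·(x+n)_{[j-1]}` gives
`B_{n+1}(x) = 18 b_n + 108 (x+n+1) B_n(x)`. From this and `(n+1) b_{n+1} = 3(6n+5)(6n+7) b_n`,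
induction on `n` gives the shift equation
`(6x+5)(6x+7) B_n(x+1) = 36 x (x+n+1) B_n(x) + 6 n b_n`.
Both identities, together with `(n+1)·2^{n+1}(6n+5)!!/(2n+2)! = 3(6n+5) b_n`, express every term of
the claim through `x`, `B_n(x)` and `b_n`, and what is left is an identity of rational functions.
-/

open Polynomial

/-- The odd double factorial: `oddFac k = (2k+1)!! = 1·3·5···(2k+1)`. -/
def oddFac (k : ℕ) : ℕ := ∏ i ∈ Finset.range (k+1), (2*i+1)

/-- `bSeq n = 2^n·(6n+1)!!/(2n)!` as a rational number. -/
def bSeq (n : ℕ) : ℚ := 2^n * oddFac (3*n) / (2*n).factorial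

/-- The falling factorial `(p)_{[j]} = p(p-1)···(p-j+1)` of a polynomial `p`, with
`(p)_{[0]} = 1`. -/
noncomputable def ff (p : Polynomial ℚ) (j : ℕ) : Polynomial ℚ :=
  ∏ i ∈ Finset.range j, (p - Polynomial.C (i : ℚ))

/-- The polynomial `B_n(x) = (1/6)·Σ_{j=1}^{n} 108^j·b_{n−j}·(x+n)_{[j−1]}`. -/
noncomputable def Bpoly (n : ℕ) : Polynomial ℚ :=
  Polynomial.C (1/6 : ℚ) *
    ∑ j ∈ Finset.Icc 1 n,
      Polynomial.C ((108:ℚ)^j * bSeq (n-j)) * ff (Polynomial.X + Polynomial.C (n:ℚ)) (j-1)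

noncomputable section

/-- The image of `B_n` in the field of rational functions `ℚ(x)`. -/
def Bf (n : ℕ) : RatFunc ℚ := algebraMap (Polynomial ℚ) (RatFunc ℚ) (Bpoly n)

/-- The image of `B_n(x+1)` in `ℚ(x)`. -/
def BfShiftUp (n : ℕ) : RatFunc ℚ :=
  algebraMap (Polynomial ℚ) (RatFunc ℚ) ((Bpoly n).comp (Polynomial.X + 1))

/-- The image of `B_n(x-1)` in `ℚ(x)`. -/
def BfShiftDown (n : ℕ) : RatFunc ℚ :=
  algebraMap (Polynomial ℚ) (RatFunc ℚ) ((Bpoly n).comp (Polynomial.X - 1))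

/-- The generator `x` of `ℚ(x)`. -/
def Xr : RatFunc ℚ := RatFunc.X

/-- Constant rational functions. -/
def cst (a : ℚ) : RatFunc ℚ := RatFunc.C a

end

lemma oddFac_succ (k : ℕ) : oddFac (k + 1) = oddFac k * (2 * k + 3) := by
  rw [oddFac, Finset.prod_range_succ, ← oddFac]
  ring

lemma succ_mul_bSeq_succ (n : ℕ) :
    ((n : ℚ) + 1) * bSeq (n + 1) = 3 * (6 * n + 5) * (6 * n + 7) * bSeq n := by
  rw [bSeq, bSeq, show 3 * (n + 1) = 3 * n + 1 + 1 + 1 by omega, oddFac_succ, oddFac_succ,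
    oddFac_succ, show 2 * (n + 1) = 2 * n + 1 + 1 by omega, Nat.factorial_succ, Nat.factorial_succ]
  have := Nat.factorial_ne_zero (2 * n)
  push_cast
  field_simp
  ring

lemma succ_mul_two_pow_mul_oddFac_div_factorial (n : ℕ) :
    ((n : ℚ) + 1) * (2 ^ (n + 1) * (oddFac (3 * n + 2) : ℚ) / (2 * n + 2).factorial)
      = 3 * (6 * n + 5) * bSeq n := by
  rw [bSeq, oddFac_succ, oddFac_succ, show 2 * n + 2 = 2 * n + 1 + 1 by omega,
    Nat.factorial_succ, Nat.factorial_succ]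
  have := Nat.factorial_ne_zero (2 * n)
  push_cast
  field_simp
  ring

lemma ff_succ (p : ℚ[X]) (j : ℕ) : ff p (j + 1) = p * ff (p - 1) j := by
  simp only [ff, Finset.prod_range_succ', Nat.cast_add, Nat.cast_one, C_add, C_1, Nat.cast_zero,
    C_0, sub_zero, sub_sub, add_comm (1 : ℚ[X])]
  ring

lemma Bpoly_eq_sum_range (n : ℕ) :
    Bpoly n = C (1 / 6 : ℚ) * ∑ i ∈ Finset.range n,
      C ((108 : ℚ) ^ (i + 1) * bSeq (n - (i + 1))) * ff (X + C (n : ℚ)) i := by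
  rw [Bpoly, ← Finset.Ico_add_one_right_eq_Icc, Finset.sum_Ico_eq_sum_range, Nat.add_sub_cancel]
  simp only [add_comm 1, Nat.add_sub_cancel]

lemma Bpoly_succ (n : ℕ) :
    Bpoly (n + 1) = C (18 * bSeq n) + 108 * (X + C ((n : ℚ) + 1)) * Bpoly n := by
  have hterm (i : ℕ) :
      C ((108 : ℚ) ^ (i + 1 + 1) * bSeq (n + 1 - (i + 1 + 1)))
          * ff (X + C ((n + 1 : ℕ) : ℚ)) (i + 1)
        = 108 * (X + C ((n : ℚ) + 1)) *
          (C ((108 : ℚ) ^ (i + 1) * bSeq (n - (i + 1))) * ff (X + C (n : ℚ)) i) := by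
    have hshift : X + C ((n : ℚ) + 1) - 1 = X + C (n : ℚ) := by rw [C_add, C_1]; ring
    rw [Nat.cast_succ, ff_succ, hshift, show n + 1 - (i + 1 + 1) = n - (i + 1) by omega, pow_succ,
      mul_right_comm, C_mul (b := (108 : ℚ)), map_ofNat]
    ring
  rw [Bpoly_eq_sum_range, Bpoly_eq_sum_range, Finset.sum_range_succ',
    Finset.sum_congr rfl fun i _ => hterm i, ← Finset.mul_sum]
  simp only [ff, Finset.range_zero, Finset.prod_empty, mul_one, zero_add, pow_one,
    Nat.add_sub_cancel]
  rw [mul_add, ← C_mul, show (1 / 6 : ℚ) * (108 * bSeq n) = 18 * bSeq n by ring]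
  ring

lemma mul_Bpoly_comp_X_add_one (n : ℕ) :
    (6 * X + 5) * (6 * X + 7) * (Bpoly n).comp (X + 1)
      = 36 * X * (X + C ((n : ℚ) + 1)) * Bpoly n + C (6 * n * bSeq n) := by
  induction n with
  | zero => simp [Bpoly]
  | succ n ih =>
    have hb := congrArg C (succ_mul_bSeq_succ n)
    rw [Bpoly_succ]
    simp only [add_comp, mul_comp, C_comp, X_comp, ofNat_comp, natCast_comp, one_comp, C_mul,
      C_add, map_ofNat, map_natCast, C_1, Nat.cast_succ] at hb ih ⊢
    linear_combination 108 * (X + (n : ℚ[X]) + 2) * ih - 6 * hb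

lemma mul_Xr_add_ne_zero (a : ℚ) {b : ℚ} (hb : b ≠ 0) : (a : RatFunc ℚ) * Xr + b ≠ 0 := by
  have hp : C a * X + C b ≠ 0 := fun h => hb (by simpa using congrArg (eval 0) h)
  simpa [Xr, RatFunc.algebraMap_C, RatFunc.algebraMap_X, eq_ratCast] using
    RatFunc.algebraMap_ne_zero hp

lemma Bf_succ (n : ℕ) : Bf (n + 1) = 18 * cst (bSeq n) + 108 * (Xr + n + 1) * Bf n := by
  simp only [Bf, Bpoly_succ, map_add, map_mul, RatFunc.algebraMap_C, RatFunc.algebraMap_X,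
    map_ofNat, map_natCast, map_one, cst, Xr]
  ring

lemma BfShiftUp_eq (n : ℕ) :
    BfShiftUp n
      = (36 * Xr * (Xr + n + 1) * Bf n + 6 * n * cst (bSeq n)) / ((6 * Xr + 5) * (6 * Xr + 7)) := by
  have h5 : 6 * Xr + 5 ≠ 0 := by simpa using mul_Xr_add_ne_zero 6 (b := 5) (by norm_num)
  have h7 : 6 * Xr + 7 ≠ 0 := by simpa using mul_Xr_add_ne_zero 6 (b := 7) (by norm_num)
  have key := congrArg (algebraMap ℚ[X] (RatFunc ℚ)) (mul_Bpoly_comp_X_add_one n)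
  simp only [map_add, map_mul, RatFunc.algebraMap_C, RatFunc.algebraMap_X, map_ofNat,
    map_natCast, map_one] at key
  rw [eq_div_iff (mul_ne_zero h5 h7)]
  simp only [BfShiftUp, Bf, cst, Xr]
  linear_combination key

/-- The identity in `ℚ(x)`, for `n ≥ 0`:
`B_{n+1}(x) + b_{n+1}/(6x+1) = −(3(6x+5)(6x+7)/x)·(B_n(x+1) + b_n/(6x+7))
 + 216(x+n+1)·(B_n(x) + b_n/(6x+1)) + (2^{n+1}·(6n+5)!!/(2n+2)!)·(x+n+1)/(x(6x+1))`.
Here `(6n+5)!! = oddFac (3n+2)`. -/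
theorem stmt7 (n : ℕ) :
    Bf (n+1) + cst (bSeq (n+1)) / (6*Xr+1)
      = -(3 * (6*Xr+5) * (6*Xr+7) / Xr) * (BfShiftUp n + cst (bSeq n) / (6*Xr+7))
        + 216 * (Xr + (n : RatFunc ℚ) + 1) * (Bf n + cst (bSeq n) / (6*Xr+1))
        + cst (2^(n+1) * (oddFac (3*n+2) : ℚ) / (2*n+2).factorial)
            * (Xr + (n : RatFunc ℚ) + 1) / (Xr * (6*Xr+1)) := by
  have hb : bSeq (n + 1) = 3 * (6 * n + 5) * (6 * n + 7) * bSeq n / (n + 1) := by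
    rw [eq_div_iff (by positivity)]
    linear_combination succ_mul_bSeq_succ n
  have hc : 2 ^ (n + 1) * (oddFac (3 * n + 2) : ℚ) / (2 * n + 2).factorial
      = 3 * (6 * n + 5) * bSeq n / (n + 1) := by
    rw [eq_div_iff (by positivity)]
    linear_combination succ_mul_two_pow_mul_oddFac_div_factorial n
  rw [Bf_succ, BfShiftUp_eq, hb, hc]
  simp only [cst, map_div₀, map_mul, map_add, map_ofNat, map_natCast, map_one]
  -- `field_simp` looks for the side conditions in its own normal form `Xr * 6 + k`.
  have h1 : Xr * 6 + 1 ≠ 0 := by rw [mul_comm]; simpa using mul_Xr_add_ne_zero 6 one_ne_zero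
  have h5 : Xr * 6 + 5 ≠ 0 := by
    rw [mul_comm]; simpa using mul_Xr_add_ne_zero 6 (b := 5) (by norm_num)
  have h7 : Xr * 6 + 7 ≠ 0 := by
    rw [mul_comm]; simpa using mul_Xr_add_ne_zero 6 (b := 7) (by norm_num)
  have hX : Xr ≠ 0 := RatFunc.X_ne_zero
  have hn : (n : RatFunc ℚ) + 1 ≠ 0 := Nat.cast_add_one_ne_zero n
  field_simp
  ring
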